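/- For every finite simple graph H on t ≥ 1 vertices and every integer n ≥ t: max over simple graphs G on n vertices of P(H,G) is at most I(H) + t²/n. -/

import Mathlib

open Filter Topology SimpleGraph

namespace IndPaper

/-- The pullback of `G : SimpleGraph V` along a map `f : Fin t → V`:
distinct `i, j` are adjacent iff `f i` and `f j` are adjacent in `G`. -/
def pull {V : Type*} {t : ℕ} (G : SimpleGraph V) (f : Fin t → V) : SimpleGraph (Fin t) where
  Adj i j := G.Adj (f i) (f j)
  symm := ⟨fun i j h => G.adj_symm h⟩
  loopless := ⟨fun i h => G.irrefl h⟩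

/-- `r(H,G)`: the labeled density with repetitions of the labeled graph `H` in `G`. -/
noncomputable def labDensity {V : Type*} [Fintype V] {t : ℕ}
    (H : SimpleGraph (Fin t)) (G : SimpleGraph V) : ℝ :=
  (Nat.card {f : Fin t → V // pull G f = H} : ℝ) / (Fintype.card V : ℝ) ^ t

/-- `R(H,G)`: the density with repetitions of the isomorphism type of `H` in `G`. -/
noncomputable def repDensity {V : Type*} [Fintype V] {t : ℕ}
    (H : SimpleGraph (Fin t)) (G : SimpleGraph V) : ℝ :=
  (Nat.card {f : Fin t → V // Nonempty (pull G f ≃g H)} : ℝ) / (Fintype.card V : ℝ) ^ t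

/-- `p(H,G)`: the labeled density without repetitions (injective samples). -/
noncomputable def injDensity {V : Type*} [Fintype V] {t : ℕ}
    (H : SimpleGraph (Fin t)) (G : SimpleGraph V) : ℝ :=
  (Nat.card {f : Fin t → V // Function.Injective f ∧ pull G f = H} : ℝ) /
    ((Fintype.card V).descFactorial t : ℝ)

/-- `P(H,G)`: the number of `t`-subsets of `V(G)` inducing a copy of `H`, over `C(n,t)`. -/
noncomputable def subsetDensity {V : Type*} [Fintype V] {t : ℕ}
    (H : SimpleGraph (Fin t)) (G : SimpleGraph V) : ℝ :=
  (Nat.card {s : Finset V // s.card = t ∧ Nonempty (G.induce (↑s : Set V) ≃g H)} : ℝ) /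
    ((Fintype.card V).choose t : ℝ)

/-- `max_{|G|=n} P(H,G)`. -/
noncomputable def maxDensity {t : ℕ} (H : SimpleGraph (Fin t)) (n : ℕ) : ℝ :=
  sSup {x : ℝ | ∃ G : SimpleGraph (Fin n), x = subsetDensity H G}

/-- `min_{|G|=n} P(H,G)`. -/
noncomputable def minDensity {t : ℕ} (H : SimpleGraph (Fin t)) (n : ℕ) : ℝ :=
  sInf {x : ℝ | ∃ G : SimpleGraph (Fin n), x = subsetDensity H G}

/-- The inducibility `I(H) = lim_n max_{|G|=n} P(H,G)` (the sequence of maxima is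
eventually non-increasing, hence the limit exists and equals the `limsup`). -/
noncomputable def inducibility {t : ℕ} (H : SimpleGraph (Fin t)) : ℝ :=
  Filter.limsup (fun n => maxDensity H n) Filter.atTop

/-- The minimal inducibility `i(H) = lim_n min_{|G|=n} P(H,G)` (the sequence of minima is
eventually non-decreasing, hence the limit exists and equals the `liminf`). -/
noncomputable def minInducibility {t : ℕ} (H : SimpleGraph (Fin t)) : ℝ :=
  Filter.liminf (fun n => minDensity H n) Filter.atTop

/-- The spectral profile: discrete Fourier transform of the labeled profile over the group
of labeled `t`-vertex graphs under symmetric difference of edge sets. -/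
noncomputable def spectral {V : Type*} [Fintype V] {t : ℕ}
    (H : SimpleGraph (Fin t)) (G : SimpleGraph V) : ℝ :=
  ∑ H' : SimpleGraph (Fin t),
    (-1 : ℝ) ^ (Nat.card (H ⊓ H').edgeSet) * labDensity H' G

/-- The tensor product `G ⊗ G'`. -/
def tensor {V W : Type*} (G : SimpleGraph V) (G' : SimpleGraph W) : SimpleGraph (V × W) where
  Adj x y := Xor' (G.Adj x.1 y.1) (G'.Adj x.2 y.2)
  symm := ⟨fun x y h => by
    rcases h with ⟨h1, h2⟩ | ⟨h1, h2⟩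
    · exact Or.inl ⟨h1.symm, fun hc => h2 hc.symm⟩
    · exact Or.inr ⟨h1.symm, fun hc => h2 hc.symm⟩⟩
  loopless := ⟨fun x h => by
    rcases h with ⟨h1, _⟩ | ⟨h1, _⟩
    · exact G.irrefl h1
    · exact G'.irrefl h1⟩

/-- The composition (lexicographic product) `G ⊙ G'`. -/
def comp {V W : Type*} (G : SimpleGraph V) (G' : SimpleGraph W) : SimpleGraph (V × W) where
  Adj x y := G.Adj x.1 y.1 ∨ (x.1 = y.1 ∧ G'.Adj x.2 y.2)
  symm := ⟨fun x y h => by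
    rcases h with h | ⟨h1, h2⟩
    · exact Or.inl h.symm
    · exact Or.inr ⟨h1.symm, h2.symm⟩⟩
  loopless := ⟨fun x h => by
    rcases h with h | ⟨_, h2⟩
    · exact G.irrefl h
    · exact G'.irrefl h2⟩

/-- The blow-up of `G` of order `m`. -/
def blowUp {V : Type*} (G : SimpleGraph V) (m : ℕ) : SimpleGraph (V × Fin m) where
  Adj x y := G.Adj x.1 y.1
  symm := ⟨fun _ _ h => G.adj_symm h⟩
  loopless := ⟨fun _ h => G.irrefl h⟩

/-- Vertex type of the `n`-fold iterated composition. -/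
def iterVert (V : Type) : ℕ → Type
  | 0 => PUnit
  | n + 1 => V × iterVert V n

instance iterVertFintype (V : Type) [Fintype V] : (n : ℕ) → Fintype (iterVert V n)
  | 0 => inferInstanceAs (Fintype PUnit)
  | n + 1 => letI := iterVertFintype V n; inferInstanceAs (Fintype (V × iterVert V n))

/-- The `n`-fold iterated composition `G^{⊙n}` (`n = 0` gives a single vertex). -/
def nestedPow {V : Type} (G : SimpleGraph V) : (n : ℕ) → SimpleGraph (iterVert V n)
  | 0 => (⊥ : SimpleGraph PUnit)
  | n + 1 => comp G (nestedPow G n)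

/- Fixed labeled representatives of the 4-vertex isomorphism types. -/
def K3 : SimpleGraph (Fin 3) := ⊤
def K4 : SimpleGraph (Fin 4) := ⊤
def A4 : SimpleGraph (Fin 4) := ⊥
def P4 : SimpleGraph (Fin 4) := SimpleGraph.pathGraph 4
def C4 : SimpleGraph (Fin 4) := SimpleGraph.cycleGraph 4
def M4 : SimpleGraph (Fin 4) :=
  SimpleGraph.fromRel (fun i j => (i = 0 ∧ j = 1) ∨ (i = 2 ∧ j = 3))
def V4 : SimpleGraph (Fin 4) :=
  SimpleGraph.fromRel (fun i j => (i = 0 ∧ j = 1) ∨ (i = 0 ∧ j = 2))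
def Q4 : SimpleGraph (Fin 4) :=
  SimpleGraph.fromRel (fun i j =>
    (i = 0 ∧ j = 1) ∨ (i = 0 ∧ j = 2) ∨ (i = 1 ∧ j = 2) ∨ (i = 0 ∧ j = 3))
def T4 : SimpleGraph (Fin 4) :=
  SimpleGraph.fromRel (fun i j => (i = 0 ∧ j = 1) ∨ (i = 0 ∧ j = 2) ∨ (i = 1 ∧ j = 2))
def S4 : SimpleGraph (Fin 4) :=
  SimpleGraph.fromRel (fun i j => i = 0 ∧ (j = 1 ∨ j = 2 ∨ j = 3))
def D4 : SimpleGraph (Fin 4) :=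
  SimpleGraph.fromRel (fun i j =>
    (i = 0 ∧ j = 1) ∨ (i = 0 ∧ j = 2) ∨ (i = 0 ∧ j = 3) ∨ (i = 1 ∧ j = 2) ∨ (i = 1 ∧ j = 3))
def E4 : SimpleGraph (Fin 4) :=
  SimpleGraph.fromRel (fun i j => i = 0 ∧ j = 1)

end IndPaper

/-!
Blow up every vertex of an `n`-vertex graph `G` into `k` independent copies. Each induced copy of
`H` in `G` lifts to `k ^ t` induced copies in the blow-up, one for each choice of copies of its
vertices, while `k ^ t C(n, t) / C(n k, t) ≥ 1 - t² / n` by Bernoulli's inequality. Hence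
`P(H, G) - t² / n ≤ max_{|G'| = n k} P(H, G')` for every `k`, and the bound survives in the
`limsup` defining `I(H)`.
-/

open Finset

section Binomial

lemma one_sub_sq_div_le_descFactorial_div_pow {n t : ℕ} (hn : 0 < n) (ht : t ≤ n) :
    1 - (t : ℝ) ^ 2 / n ≤ n.descFactorial t / (n : ℝ) ^ t := by
  have hnR : (0 : ℝ) < n := mod_cast hn
  have htR : (t : ℝ) ≤ n := mod_cast ht
  have hbernoulli := one_add_mul_le_pow (a := -(((t : ℝ) - 1) / n))
    (by rw [neg_le_neg_iff, div_le_iff₀ hnR]; linarith) t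
  calc 1 - (t : ℝ) ^ 2 / n ≤ 1 + t * -(((t : ℝ) - 1) / n) := by
        rw [mul_neg, ← mul_div_assoc, ← sub_eq_add_neg, sub_le_sub_iff_left]
        gcongr
        nlinarith
    _ ≤ (1 + -(((t : ℝ) - 1) / n)) ^ t := hbernoulli
    _ = ((n + 1 - t : ℕ) : ℝ) ^ t / (n : ℝ) ^ t := by
        rw [← div_pow, Nat.cast_sub (by omega)]
        field_simp
        push_cast
        ring
    _ ≤ n.descFactorial t / (n : ℝ) ^ t := by
        gcongr
        exact_mod_cast Nat.pow_sub_le_descFactorial n t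

lemma descFactorial_div_pow_le_choose_mul_pow_div_choose {n t k : ℕ} (ht : t ≤ n) (hk : 0 < k) :
    (n.descFactorial t / (n : ℝ) ^ t) ≤ n.choose t * (k : ℝ) ^ t / (n * k).choose t := by
  have hchoose : (0 : ℝ) < (n * k).choose t :=
    mod_cast Nat.choose_pos (ht.trans (Nat.le_mul_of_pos_right n hk))
  have hnt : (0 : ℝ) < (n : ℝ) ^ t := by
    rcases Nat.eq_zero_or_pos n with rfl | hn
    · simp [Nat.le_zero.mp ht]
    · positivity
  rw [div_le_div_iff₀ hnt hchoose]
  have key : n.descFactorial t * (n * k).choose t ≤ n.choose t * k ^ t * n ^ t := by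
    refine Nat.le_of_mul_le_mul_left ?_ t.factorial_pos
    calc t.factorial * (n.descFactorial t * (n * k).choose t)
        = n.descFactorial t * (n * k).descFactorial t := by
          rw [Nat.descFactorial_eq_factorial_mul_choose (n * k)]; ring
      _ ≤ n.descFactorial t * (n * k) ^ t := by gcongr; exact Nat.descFactorial_le_pow _ _
      _ = t.factorial * (n.choose t * k ^ t * n ^ t) := by
          rw [Nat.descFactorial_eq_factorial_mul_choose, mul_pow]; ring
  exact_mod_cast key

end Binomial

namespace IndPaper

section InducedCopies

variable {t : ℕ} (H : SimpleGraph (Fin t)) {V W : Type*}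

def inducedCopies (G : SimpleGraph V) : Set (Finset V) :=
  {s | s.card = t ∧ Nonempty (G.induce (↑s : Set V) ≃g H)}

lemma map_univ_mem_inducedCopies [Fintype W] {A : SimpleGraph W} {G : SimpleGraph V}
    (φ : A ↪g G) (e : A ≃g H) : univ.map φ.toEmbedding ∈ inducedCopies H G := by
  refine ⟨by simpa using Fintype.card_congr e.toEquiv, ?_⟩
  have hrange : (↑(univ.map φ.toEmbedding) : Set V) = Set.range φ := by simp
  rw [hrange]
  exact ⟨φ.isoInduceRange.symm.trans e⟩

lemma map_mem_inducedCopies {G : SimpleGraph V} {G' : SimpleGraph W} (φ : G ↪g G')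
    {s : Finset V} (hs : s ∈ inducedCopies H G) : s.map φ.toEmbedding ∈ inducedCopies H G' := by
  obtain ⟨-, ⟨e⟩⟩ := hs
  convert map_univ_mem_inducedCopies H (φ.comp (Embedding.induce (↑s : Set V))) e
  ext; simp

lemma card_inducedCopies_le_of_embedding [Finite W] {G : SimpleGraph V} {G' : SimpleGraph W}
    (φ : G ↪g G') : Nat.card (inducedCopies H G) ≤ Nat.card (inducedCopies H G') :=
  Nat.card_le_card_of_injective (fun s => ⟨s.1.map φ.toEmbedding, map_mem_inducedCopies H φ s.2⟩)
    fun _ _ h => Subtype.ext (map_injective _ (congrArg Subtype.val h))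

variable [Fintype V] [Fintype W]

lemma subsetDensity_eq (G : SimpleGraph V) :
    subsetDensity H G = Nat.card (inducedCopies H G) / (Fintype.card V).choose t := rfl

lemma subsetDensity_congr {G : SimpleGraph V} {G' : SimpleGraph W} (e : G ≃g G') :
    subsetDensity H G = subsetDensity H G' := by
  rw [subsetDensity_eq, subsetDensity_eq, Fintype.card_congr e.toEquiv,
    (card_inducedCopies_le_of_embedding H e.toEmbedding).antisymm
      (card_inducedCopies_le_of_embedding H e.symm.toEmbedding)]

lemma card_inducedCopies_le_choose (G : SimpleGraph V) :
    Nat.card (inducedCopies H G) ≤ (Fintype.card V).choose t := by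
  classical
  calc Nat.card (inducedCopies H G)
      ≤ Nat.card (powersetCard t (univ : Finset V)) :=
        Nat.card_mono (Set.toFinite _) fun s hs => mem_powersetCard_univ.mpr hs.1
    _ = (Fintype.card V).choose t := by simp

lemma subsetDensity_nonneg (G : SimpleGraph V) : 0 ≤ subsetDensity H G := by
  rw [subsetDensity_eq]; positivity

lemma subsetDensity_le_one (G : SimpleGraph V) : subsetDensity H G ≤ 1 := by
  rw [subsetDensity_eq]
  exact div_le_one_of_le₀ (mod_cast card_inducedCopies_le_choose H G) (Nat.cast_nonneg _)

end InducedCopies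

section MaxDensity

variable {t : ℕ} (H : SimpleGraph (Fin t))

lemma bddAbove_subsetDensity (m : ℕ) :
    BddAbove {x : ℝ | ∃ G : SimpleGraph (Fin m), x = subsetDensity H G} :=
  ⟨1, by rintro _ ⟨G, rfl⟩; exact subsetDensity_le_one H G⟩

lemma subsetDensity_le_maxDensity {V : Type*} [Fintype V] (G : SimpleGraph V) :
    subsetDensity H G ≤ maxDensity H (Fintype.card V) := by
  rw [subsetDensity_congr H (Iso.comap (Fintype.equivFin V).symm G).symm]
  exact le_csSup (bddAbove_subsetDensity H _) ⟨_, rfl⟩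

lemma maxDensity_le_one (m : ℕ) : maxDensity H m ≤ 1 :=
  csSup_le ⟨_, ⊥, rfl⟩ fun _ ⟨G, hG⟩ => hG ▸ subsetDensity_le_one H G

lemma isBoundedUnder_maxDensity : IsBoundedUnder (· ≤ ·) atTop (maxDensity H) :=
  isBoundedUnder_of ⟨1, maxDensity_le_one H⟩

end MaxDensity

section BlowUp

variable {V : Type*} (G : SimpleGraph V) {k : ℕ}

def blowUpSection (s : Set V) (g : s → Fin k) : G.induce s ↪g blowUp G k where
  toFun v := (v, g v)
  inj' _ _ h := Subtype.ext (congrArg Prod.fst h)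
  map_rel_iff' := Iff.rfl

lemma mem_map_blowUpSection {s : Finset V} {g : (↑s : Set V) → Fin k} {x : V × Fin k} :
    x ∈ univ.map (blowUpSection G _ g).toEmbedding ↔ ∃ h : x.1 ∈ s, g ⟨x.1, h⟩ = x.2 := by
  constructor
  · intro hx
    obtain ⟨⟨v, hv⟩, -, rfl⟩ := mem_map.mp hx
    exact ⟨hv, rfl⟩
  · rintro ⟨hx, hg⟩
    exact mem_map.mpr ⟨⟨x.1, hx⟩, mem_univ _, Prod.ext rfl hg⟩

lemma exists_mem_map_blowUpSection_iff {s : Finset V} {g : (↑s : Set V) → Fin k} {v : V} :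
    (∃ a, (v, a) ∈ univ.map (blowUpSection G _ g).toEmbedding) ↔ v ∈ s :=
  ⟨fun ⟨_, h⟩ => ((mem_map_blowUpSection G).mp h).1,
    fun h => ⟨g ⟨v, h⟩, (mem_map_blowUpSection G).mpr ⟨h, rfl⟩⟩⟩

variable {t : ℕ} (H : SimpleGraph (Fin t)) [Fintype V]

lemma card_inducedCopies_mul_pow_le_blowUp :
    Nat.card (inducedCopies H G) * k ^ t ≤ Nat.card (inducedCopies H (blowUp G k)) := by
  classical
  let F : (Σ s : inducedCopies H G, (↑s.1 : Set V) → Fin k) → inducedCopies H (blowUp G k) :=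
    fun p => ⟨_, map_univ_mem_inducedCopies H (blowUpSection G _ p.2) p.1.2.2.some⟩
  have hF : Function.Injective F := by
    rintro ⟨⟨s₁, hs₁⟩, g₁⟩ ⟨⟨s₂, hs₂⟩, g₂⟩ h
    have hT : univ.map (blowUpSection G (↑s₁ : Set V) g₁).toEmbedding =
        univ.map (blowUpSection G (↑s₂ : Set V) g₂).toEmbedding := congrArg Subtype.val h
    obtain rfl : s₁ = s₂ := by
      ext v
      rw [← exists_mem_map_blowUpSection_iff G (g := g₁), hT, exists_mem_map_blowUpSection_iff]
    obtain rfl : g₁ = g₂ := funext fun v => by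
      have hv : (v.1, g₁ v) ∈ univ.map (blowUpSection G (↑s₁ : Set V) g₁).toEmbedding :=
        (mem_map_blowUpSection G).mpr ⟨v.2, rfl⟩
      rw [hT] at hv
      exact ((mem_map_blowUpSection G).mp hv).2.symm
    rfl
  calc Nat.card (inducedCopies H G) * k ^ t
      = Nat.card (Σ s : inducedCopies H G, (↑s.1 : Set V) → Fin k) := by
        have hfib (s : inducedCopies H G) : Nat.card ((↑s.1 : Set V) → Fin k) = k ^ t := by
          simp [s.2.1]
        rw [Nat.card_sigma, sum_congr rfl fun s _ => hfib s, sum_const, card_univ, smul_eq_mul,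
          Nat.card_eq_fintype_card]
    _ ≤ _ := Nat.card_le_card_of_injective F hF

lemma subsetDensity_sub_le_subsetDensity_blowUp (hV : 0 < Fintype.card V)
    (ht : t ≤ Fintype.card V) (hk : 0 < k) :
    subsetDensity H G - (t : ℝ) ^ 2 / Fintype.card V ≤ subsetDensity H (blowUp G k) := by
  set n := Fintype.card V
  have hcard : Fintype.card (V × Fin k) = n * k := by simp [n]
  have hchoose : (0 : ℝ) < n.choose t := mod_cast Nat.choose_pos ht
  have hratio := (one_sub_sq_div_le_descFactorial_div_pow hV ht).trans
    (descFactorial_div_pow_le_choose_mul_pow_div_choose (k := k) ht hk)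
  have hP₀ := subsetDensity_nonneg H G
  have hP₁ := subsetDensity_le_one H G
  have hsq : (0 : ℝ) ≤ (t : ℝ) ^ 2 / n := by positivity
  calc subsetDensity H G - (t : ℝ) ^ 2 / n ≤ subsetDensity H G * (1 - (t : ℝ) ^ 2 / n) := by
        nlinarith
    _ ≤ subsetDensity H G * (n.choose t * (k : ℝ) ^ t / (n * k).choose t) := by gcongr
    _ = Nat.card (inducedCopies H G) * (k : ℝ) ^ t / (n * k).choose t := by
        rw [subsetDensity_eq]
        change Nat.card (inducedCopies H G) / (n.choose t : ℝ) * _ = _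
        field_simp
    _ ≤ Nat.card (inducedCopies H (blowUp G k)) / (n * k).choose t := by
        gcongr
        exact_mod_cast card_inducedCopies_mul_pow_le_blowUp G H
    _ = subsetDensity H (blowUp G k) := by rw [subsetDensity_eq, hcard]

end BlowUp

end IndPaper

open IndPaper in
/-- For `H` on `t ≥ 1` vertices and `n ≥ t`, `max_{|G|=n} P(H,G) ≤ I(H) + t²/n`. -/
theorem maxDensity_le_inducibility_add {t : ℕ} (ht : 1 ≤ t) (H : SimpleGraph (Fin t))
    {n : ℕ} (hn : t ≤ n) :
    maxDensity H n ≤ inducibility H + (t : ℝ) ^ 2 / n := by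
  have hn₀ : 0 < n := ht.trans hn
  refine csSup_le ⟨_, ⊥, rfl⟩ ?_
  rintro _ ⟨G, rfl⟩
  have hfreq : ∃ᶠ m in atTop, subsetDensity H G - (t : ℝ) ^ 2 / n ≤ maxDensity H m := by
    refine frequently_atTop.mpr fun N => ⟨n * (N + 1), by nlinarith, ?_⟩
    calc subsetDensity H G - (t : ℝ) ^ 2 / n
        ≤ subsetDensity H (blowUp G (N + 1)) := by
          simpa using subsetDensity_sub_le_subsetDensity_blowUp G H (by simpa using hn₀)
            (by simpa using hn) N.succ_pos
      _ ≤ maxDensity H (n * (N + 1)) := by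
          simpa using subsetDensity_le_maxDensity H (blowUp G (N + 1))
  exact sub_le_iff_le_add.mp (le_limsup_of_frequently_le hfreq (isBoundedUnder_maxDensity H))
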